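/- For all complex numbers p0, pt, p1, p∞, p0t, p1t, p01 the polynomial identity det G = q01² − 4W holds; in particular, on the Jimbo–Fricke surface W = 0 one has q01² = det G. -/

import Mathlib

/-!
`G` does not involve `p01`, while `W` is a monic quadratic in `p01` with linear coefficient
`p0t·p1t − ω01` and `q01 = ∂W/∂p01`. Completing the square, `q01² − 4W` is the discriminant of
`W` in `p01`, and a cofactor expansion shows that `det G` is that same discriminant.
-/

section

variable {R : Type*} [CommRing R]

theorem sq_sub_four_mul_eq_discrim (a b c x : R) :
    (2 * a * x + b) ^ 2 - 4 * a * (a * (x * x) + b * x + c) = discrim a b c := by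
  rw [discrim]; ring

theorem det_gram_eq_discrim (p0 pt p1 pinf p0t p1t : R) :
    (!![2, -p0, -pt, p1t; -p0, 2, p0t, -pinf; -pt, p0t, 2, -p1; p1t, -pinf, -p1, 2] :
      Matrix (Fin 4) (Fin 4) R).det =
      discrim 1 (p0t * p1t - (p0 * p1 + pt * pinf))
        (p0t ^ 2 + p1t ^ 2 - (p0 * pt + p1 * pinf) * p0t - (pt * p1 + p0 * pinf) * p1t
          + (p0 * pt * p1 * pinf + p0 ^ 2 + pt ^ 2 + p1 ^ 2 + pinf ^ 2) - 4) := by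
  rw [discrim, Matrix.det_succ_row_zero, Fin.sum_univ_four]
  simp only [Matrix.det_fin_three, Matrix.submatrix_apply, Matrix.of_apply, Matrix.cons_val',
    Matrix.cons_val_fin_one, Matrix.cons_val, Fin.succAbove, Fin.isValue, Fin.reduceSucc,
    Fin.reduceCastSucc, Fin.reduceLT, ↓reduceIte, Fin.coe_ofNat_eq_mod]
  ring

end

theorem detG_eq_q01_sq_sub_four_W
    (p0 pt p1 pinf p0t p1t p01 ω0t ω1t ω01 ω4 W q01 : ℂ)
    (hω0t : ω0t = p0 * pt + p1 * pinf)
    (hω1t : ω1t = pt * p1 + p0 * pinf)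
    (hω01 : ω01 = p0 * p1 + pt * pinf)
    (hω4 : ω4 = p0 * pt * p1 * pinf + p0 ^ 2 + pt ^ 2 + p1 ^ 2 + pinf ^ 2)
    (hW : W = p0t * p1t * p01 + p0t ^ 2 + p1t ^ 2 + p01 ^ 2
      - ω0t * p0t - ω1t * p1t - ω01 * p01 + ω4 - 4)
    (hq01 : q01 = 2 * p01 + p0t * p1t - ω01)
    (G : Matrix (Fin 4) (Fin 4) ℂ)
    (hG : G = !![2, -p0, -pt, p1t;
                 -p0, 2, p0t, -pinf;
                 -pt, p0t, 2, -p1;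
                 p1t, -pinf, -p1, 2]) :
    G.det = q01 ^ 2 - 4 * W ∧ (W = 0 → q01 ^ 2 = G.det) := by
  subst hω0t hω1t hω01 hω4
  have hdet : G.det = q01 ^ 2 - 4 * W := by
    rw [hG, det_gram_eq_discrim, ← sq_sub_four_mul_eq_discrim _ _ _ p01, hq01, hW]
    ring
  exact ⟨hdet, fun hW₀ => by rw [hdet, hW₀]; ring⟩
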